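/- Let (𝒱, ℰ) be a tree-cover of a finite metric space (X,d) and let W be a minimum spanning tree of (X,d). For an edge e of the nerve N(𝒱,ℰ), let ℰ(e) ∈ ℰ be its corresponding cover set and let W|ℰ(e) be the restriction of W to the vertex subset ℰ(e) (keeping exactly those edges of W with both endpoints in ℰ(e)). Then for every edge e of N(𝒱,ℰ), the graph W|ℰ(e) is a tree. -/

import Mathlib

/-!
Every edge `uv` of a minimum spanning tree `W` lies in a cover set: otherwise the tree-cover
axiom gives `t` with `max (d u t) (d v t) < d u v`, and `t` lies on one side of the cut `W - uv`,
so replacing `uv` by `tv` or `tu` gives a cheaper spanning tree.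

Fix `A ∈ ℰ` with `𝒱 ∩ A = {a, b}`. Deleting the nerve edge of `A` splits the nerve tree into the
side of `a` and the side of `b`, and every other cover set lies on one side. The map that fixes
`A` pointwise and sends each point of another cover set to `a` or `b` according to its side is
constant on every cover set other than `A`, so it carries walks of `W` to walks of `W|A`. Hence
`W|A` is connected, and it is acyclic as an induced subgraph of `W`.
-/

open scoped Classical

noncomputable section

namespace Skel

/-- `m`-dimensional Euclidean space. -/
abbrev Euc (m : ℕ) : Type := EuclideanSpace ℝ (Fin m)

/-- Length (Euclidean distance between the two members) of an unordered pair of points. -/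
def sym2Dist {X : Type*} [PseudoMetricSpace X] : Sym2 X → ℝ :=
  Sym2.lift ⟨fun u v => dist u v, fun u v => dist_comm u v⟩

/-- Euclidean length of an edge under a vertex placement `pos`. -/
def edgeLen {V : Type*} {m : ℕ} (pos : V → Euc m) (e : Sym2 V) : ℝ :=
  sym2Dist (e.map pos)

/-- Straight-line segment realizing an unordered pair of vertices. -/
def edgeSeg {V : Type*} {m : ℕ} (pos : V → Euc m) : Sym2 V → Set (Euc m) :=
  Sym2.lift ⟨fun u v => segment ℝ (pos u) (pos v), fun u v => segment_symm ℝ (pos u) (pos v)⟩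

/-- Closed `ε`-offset of a set. -/
def offset {X : Type*} [PseudoMetricSpace X] (S : Set X) (ε : ℝ) : Set X :=
  {x | ∃ y ∈ S, dist x y ≤ ε}

/-- Geometric realization (union of straight-line edges) of a graph. -/
def shape {V : Type*} {m : ℕ} (G : SimpleGraph V) (pos : V → Euc m) : Set (Euc m) :=
  ⋃ e ∈ G.edgeSet, edgeSeg pos e

/-- Geometric realization of the portion of a graph inside a vertex subset `S`. -/
def shapeOn {V : Type*} {m : ℕ} (G : SimpleGraph V) (pos : V → Euc m) (S : Set V) :
    Set (Euc m) :=
  (pos '' S) ∪ ⋃ e ∈ {e ∈ G.edgeSet | ∀ x ∈ e, x ∈ S}, edgeSeg pos e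

/-- Total length of a walk in a geometric graph. -/
def walkCost {X : Type*} [PseudoMetricSpace X] {G : SimpleGraph X} {u v : X}
    (p : G.Walk u v) : ℝ :=
  (p.edges.map sym2Dist).sum

/-- Shortest-path metric of a geometric graph (edges weighted by Euclidean length). -/
def pathDist {X : Type*} [PseudoMetricSpace X] (G : SimpleGraph X) (u v : X) : ℝ :=
  sInf {c | ∃ p : G.Walk u v, walkCost p = c}

/-- Maximal edge length of a geometric graph. -/
def lmax {X : Type*} [PseudoMetricSpace X] (G : SimpleGraph X) : ℝ :=
  sSup (sym2Dist '' G.edgeSet)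

/-- Minimal distance between two sets. -/
def setDist {X : Type*} [PseudoMetricSpace X] (s t : Set X) : ℝ :=
  sInf {d | ∃ x ∈ s, ∃ y ∈ t, d = dist x y}

/-- Two edges (unordered pairs) are non-adjacent: distinct and sharing no vertex. -/
def nonAdjacent {V : Type*} (e h : Sym2 V) : Prop :=
  e ≠ h ∧ ∀ x, x ∈ e → x ∉ h

/-- The set of angles between pairs of (distinct) edges adjacent at a common vertex. -/
def angleSet {V : Type*} {m : ℕ} (T : SimpleGraph V) (pos : V → Euc m) : Set ℝ :=
  {θ | ∃ v a b : V, T.Adj v a ∧ T.Adj v b ∧ a ≠ b ∧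
    θ = EuclideanGeometry.angle (pos a) (pos v) (pos b)}

/-- Total edge cost of a graph, edges weighted by `d`. -/
def graphCost {X : Type*} (d : X → X → ℝ) (W : SimpleGraph X) : ℝ :=
  (∑ᶠ u, ∑ᶠ v, if W.Adj u v then d u v else 0) / 2

/-- A minimum spanning tree on the whole vertex type, edges weighted by `d`. -/
def IsMST {X : Type*} (d : X → X → ℝ) (W : SimpleGraph X) : Prop :=
  W.IsTree ∧ ∀ W' : SimpleGraph X, W'.IsTree → graphCost d W ≤ graphCost d W'

/-- A graph on an ambient type whose edges lie in `S` and which spans `S` as a tree. -/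
def IsSpanningTreeOn {X : Type*} (S : Set X) (W : SimpleGraph X) : Prop :=
  (∀ a b, W.Adj a b → a ∈ S ∧ b ∈ S) ∧ (W.induce S).IsTree

/-- A minimum spanning tree of the metric subspace `(S, d)`, realized on the ambient type. -/
def IsMSTOn {X : Type*} (d : X → X → ℝ) (S : Set X) (W : SimpleGraph X) : Prop :=
  IsSpanningTreeOn S W ∧
    ∀ W' : SimpleGraph X, IsSpanningTreeOn S W' → graphCost d W ≤ graphCost d W'

/-- Graph-cover `(𝒱, ℰ)` of the space `X`. -/
def IsGraphCover {X : Type*} (V : Set X) (E : Set (Set X)) : Prop :=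
  V.Finite ∧ E.Finite ∧ ⋃₀ E = Set.univ ∧
    (∀ A ∈ E, ∀ B ∈ E, A ≠ B → (A ∩ B).Subsingleton ∧ A ∩ B ⊆ V) ∧
    (∀ A ∈ E, ∃ u v : X, u ≠ v ∧ V ∩ A = {u, v})

/-- Underlying simple graph of the nerve of a cover. -/
def nerve {X : Type*} (V : Set X) (E : Set (Set X)) : SimpleGraph V where
  Adj u v := u ≠ v ∧ ∃ A ∈ E, (u : X) ∈ A ∧ (v : X) ∈ A
  symm := by
    refine ⟨?_⟩
    rintro u v ⟨h, A, hA, hu, hv⟩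
    exact ⟨Ne.symm h, A, hA, hv, hu⟩
  loopless := by
    refine ⟨?_⟩
    rintro u ⟨h, -⟩
    exact h rfl

/-- The nerve, as a multigraph with one edge per cover set, is a tree:
its underlying simple graph is a tree and there are no parallel edges. -/
def NerveIsTree {X : Type*} (V : Set X) (E : Set (Set X)) : Prop :=
  (nerve V E).IsTree ∧
    ∀ A ∈ E, ∀ B ∈ E, ∀ u v : X, u ≠ v → u ∈ V → v ∈ V →
      u ∈ A → v ∈ A → u ∈ B → v ∈ B → A = B

/-- Tree-cover of a space with distance function `d`. -/
def IsTreeCover {X : Type*} (d : X → X → ℝ) (V : Set X) (E : Set (Set X)) : Prop :=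
  IsGraphCover V E ∧ NerveIsTree V E ∧
    ∀ u v : X, u ≠ v → (¬ ∃ A ∈ E, u ∈ A ∧ v ∈ A) →
      ∃ t : X, max (d u t) (d v t) < d u v

/-- Standing hypotheses: `T` is a straight-line tree realized by `pos` in `ℝ^m`,
`C` is an `ε`-sample of `T`, `G` is a connected graph with vertex set `C` which is a
`γ`-approximation of `(T, C)`, `D ⊆ C` is `δ`-sparse in the path metric of `G`,
every vertex of `T` lies within `ε` of `D`, `θT` is the minimal angle between adjacent
edges of `T`, and `δ` satisfies the key inequality. -/
structure Standing {V : Type*} {m : ℕ} (T : SimpleGraph V) (pos : V → Euc m)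
    (C D : Set (Euc m)) (G : SimpleGraph (Euc m)) (γ ε δ θT : ℝ) : Prop where
  tree : T.IsTree
  pos_inj : Function.Injective pos
  eps_pos : 0 < ε
  gamma_ge : 1 ≤ γ
  C_fin : C.Finite
  sample : ∀ p ∈ C, ∃ q ∈ shape T pos, dist p q ≤ ε
  G_support : ∀ a b, G.Adj a b → a ∈ C ∧ b ∈ C
  G_conn : ∀ a ∈ C, ∀ b ∈ C, G.Reachable a b
  approx1 : ∀ e ∈ T.edgeSet, ∀ a ∈ C, ∀ b ∈ C,
      a ∈ offset (edgeSeg pos e) ε → b ∈ offset (edgeSeg pos e) ε →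
      pathDist G a b ≤ γ * dist a b
  approx2 : ∀ e ∈ T.edgeSet, ∀ h ∈ T.edgeSet, nonAdjacent e h →
      lmax G + 2 * ε < setDist (edgeSeg pos e) (edgeSeg pos h)
  D_sub : D ⊆ C
  sparse : ∀ a ∈ D, ∀ b ∈ D, a ≠ b → δ ≤ pathDist G a b
  vert_close : ∀ v : V, ∃ p ∈ D, dist (pos v) p ≤ ε
  theta_least : IsLeast (angleSet T pos) θT
  delta_ge : 2 * γ * (ε + ε / Real.sin (θT / 2)
      + lmax G / Real.sin (min θT (Real.pi / 2))) ≤ δ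

end Skel

open Skel

namespace SimpleGraph

variable {V V' : Type*} {G : SimpleGraph V}

theorem Reachable.map_of_forall_adj {H : SimpleGraph V'} (f : V → V')
    (hf : ∀ ⦃x y⦄, G.Adj x y → H.Reachable (f x) (f y)) {u v : V} (h : G.Reachable u v) :
    H.Reachable (f u) (f v) := by
  rw [reachable_iff_reflTransGen] at h ⊢
  exact h.lift' f fun x y hxy => (reachable_iff_reflTransGen _ _).mp (hf hxy)

theorem Connected.induce_of_retraction (hG : G.Connected) {s : Set V} (r : V → V)
    (hr_mem : ∀ x, r x ∈ s) (hr_id : ∀ x ∈ s, r x = x)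
    (hr_adj : ∀ ⦃x y⦄, G.Adj x y → r x = r y ∨ G.Adj (r x) (r y)) :
    (G.induce s).Connected := by
  let f : V → s := fun x => ⟨r x, hr_mem x⟩
  have hf : ∀ ⦃x y⦄, G.Adj x y → (G.induce s).Reachable (f x) (f y) := fun x y hxy =>
    (hr_adj hxy).elim (fun h => by rw [show f x = f y from Subtype.ext h]) fun h => Adj.reachable h
  have : Nonempty s := ⟨f hG.nonempty.some⟩
  refine .mk fun x y => ?_
  have hfx : f x = x := Subtype.ext (hr_id x x.2)
  have hfy : f y = y := Subtype.ext (hr_id y y.2)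
  simpa only [hfx, hfy] using (hG x y).map_of_forall_adj f hf

theorem Reachable.deleteEdges_or {x u v : V} (h : G.Reachable x u) :
    (G.deleteEdges {s(u, v)}).Reachable x u ∨ (G.deleteEdges {s(u, v)}).Reachable x v := by
  rw [reachable_iff_reflTransGen] at h
  induction h using Relation.ReflTransGen.head_induction_on with
  | refl => exact .inl .rfl
  | @head y z hyz _ ih =>
    by_cases he : s(y, z) = s(u, v)
    · rcases Sym2.eq_iff.mp he with ⟨rfl, -⟩ | ⟨rfl, -⟩
      exacts [.inl .rfl, .inr .rfl]
    · have hd : (G.deleteEdges {s(u, v)}).Adj y z := by simp [hyz, he]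
      exact ih.imp hd.reachable.trans hd.reachable.trans

theorem deleteEdges_sup_edge {u v : V} (h : G.Adj u v) :
    G.deleteEdges {s(u, v)} ⊔ edge u v = G := by
  ext x y
  simp only [sup_adj, deleteEdges_adj, edge_adj, Set.mem_singleton_iff, Sym2.eq_iff]
  constructor
  · rintro (⟨hxy, -⟩ | ⟨⟨rfl, rfl⟩ | ⟨rfl, rfl⟩, -⟩)
    exacts [hxy, h, h.symm]
  · intro hxy
    by_cases he : x = u ∧ y = v ∨ x = v ∧ y = u
    · exact .inr ⟨he, hxy.ne⟩
    · exact .inl ⟨hxy, he⟩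

end SimpleGraph

namespace Skel

open SimpleGraph

variable {X : Type*}

section WeightedGraph

variable [Finite X] {d : X → X → ℝ}

theorem graphCost_sup_of_disjoint {G H : SimpleGraph X} (h : Disjoint G H) :
    graphCost d (G ⊔ H) = graphCost d G + graphCost d H := by
  unfold graphCost
  rw [← add_div, ← finsum_add_distrib (Set.toFinite _) (Set.toFinite _)]
  congr 1
  refine finsum_congr fun u => ?_
  rw [← finsum_add_distrib (Set.toFinite _) (Set.toFinite _)]
  refine finsum_congr fun v => ?_
  have := disjoint_left.mp h u v
  split_ifs <;> simp_all

theorem graphCost_edge (hd : ∀ x y, d x y = d y x) {x y : X} (hxy : x ≠ y) :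
    graphCost d (edge x y) = d x y := by
  have := Fintype.ofFinite X
  calc graphCost d (edge x y)
      = (∑ u, ∑ v, ((if u = x then if v = y then d x y else 0 else 0) +
          (if u = y then if v = x then d x y else 0 else 0))) / 2 := by
        simp only [graphCost, finsum_eq_sum_of_fintype]
        congr 1
        refine Finset.sum_congr rfl fun u _ => Finset.sum_congr rfl fun v _ => ?_
        by_cases h₁ : u = x ∧ v = y
        · obtain ⟨rfl, rfl⟩ := h₁
          simp [edge_adj, hxy, hxy.symm]
        by_cases h₂ : u = y ∧ v = x
        · obtain ⟨rfl, rfl⟩ := h₂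
          simp [edge_adj, hxy, hxy.symm, hd]
        have : ¬(edge x y).Adj u v := by simp [edge_adj, h₁, h₂]
        simp only [this, if_false]
        split_ifs <;> simp_all
    _ = d x y := by simp [Finset.sum_add_distrib]

theorem IsMST.le_of_not_reachable_deleteEdges (hd : ∀ x y, d x y = d y x)
    {W : SimpleGraph X} (hW : IsMST d W) {u v x y : X} (huv : W.Adj u v)
    (hxy : ¬(W.deleteEdges {s(u, v)}).Reachable x y) : d u v ≤ d x y := by
  set Wd := W.deleteEdges {s(u, v)}
  have hne : x ≠ y := fun h => hxy (h ▸ .rfl)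
  have : Nonempty X := ⟨u⟩
  -- `x` and `y` lie on opposite sides of the cut, so `Wd ⊔ edge x y` is again a spanning tree.
  have hreach_uv : (Wd ⊔ edge x y).Reachable u v := by
    have hx := (hW.1.connected x u).deleteEdges_or (v := v)
    have hy := (hW.1.connected y u).deleteEdges_or (v := v)
    have hxy' : (Wd ⊔ edge x y).Adj x y := by simp [edge_adj, hne]
    rcases hx with hx | hx <;> rcases hy with hy | hy
    · exact absurd (hx.trans hy.symm) hxy
    · exact (hx.symm.mono le_sup_left).trans (hxy'.reachable.trans (hy.mono le_sup_left))
    · exact (hy.symm.mono le_sup_left).trans (hxy'.symm.reachable.trans (hx.mono le_sup_left))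
    · exact absurd (hx.trans hy.symm) hxy
  have htree : (Wd ⊔ edge x y).IsTree := by
    refine ⟨⟨fun p q => (hW.1.connected p q).map_of_forall_adj id fun p q hpq => ?_⟩,
      (hW.1.isAcyclic.anti (deleteEdges_le _)).sup_edge_of_not_reachable hxy⟩
    rw [← deleteEdges_sup_edge huv, sup_adj, edge_adj] at hpq
    rcases hpq with hpq | ⟨⟨rfl, rfl⟩ | ⟨rfl, rfl⟩, -⟩
    exacts [(Adj.reachable (Or.inl hpq : (Wd ⊔ edge x y).Adj _ _)), hreach_uv, hreach_uv.symm]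
  have hcost := hW.2 _ htree
  rw [← deleteEdges_sup_edge huv] at hcost
  rwa [graphCost_sup_of_disjoint ((disjoint_edge _).mpr (by simp)), graphCost_sup_of_disjoint
    ((disjoint_edge _).mpr fun h => hxy h.reachable), graphCost_edge hd huv.ne,
    graphCost_edge hd hne, add_le_add_iff_left] at hcost

end WeightedGraph

theorem IsMST.dist_le_max_of_adj [PseudoMetricSpace X] [Finite X]
    {W : SimpleGraph X} (hW : IsMST (fun a b => dist a b) W) {u v : X} (huv : W.Adj u v)
    (t : X) : dist u v ≤ max (dist u t) (dist v t) := by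
  have hcut : ¬(W.deleteEdges {s(u, v)}).Reachable u v := isBridge_iff.mp <|
    isAcyclic_iff_forall_adj_isBridge.mp hW.1.isAcyclic huv
  by_cases hu : (W.deleteEdges {s(u, v)}).Reachable u t
  · have hv : ¬(W.deleteEdges {s(u, v)}).Reachable v t := fun hv => hcut (hu.trans hv.symm)
    exact (hW.le_of_not_reachable_deleteEdges dist_comm huv hv).trans (le_max_right _ _)
  · exact (hW.le_of_not_reachable_deleteEdges dist_comm huv hu).trans (le_max_left _ _)

section Cover

variable {V : Set X} {E : Set (Set X)} {A B : Set X}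

theorem NerveIsTree.reachable_deleteEdges_of_mem (hN : NerveIsTree V E) (hA : A ∈ E)
    {a b : V} (hab : a ≠ b) (ha : (a : X) ∈ A) (hb : (b : X) ∈ A) (hB : B ∈ E) (hBA : B ≠ A)
    {x y : V} (hx : (x : X) ∈ B) (hy : (y : X) ∈ B) :
    ((nerve V E).deleteEdges {s(a, b)}).Reachable x y := by
  rcases eq_or_ne x y with rfl | hxy
  · rfl
  refine Adj.reachable ((deleteEdges_adj ..).mpr ⟨⟨hxy, B, hB, hx, hy⟩, fun he => ?_⟩)
  rw [Set.mem_singleton_iff] at he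
  have hsub : (a : X) ∈ B ∧ (b : X) ∈ B := by
    rcases Sym2.eq_iff.mp he with ⟨rfl, rfl⟩ | ⟨rfl, rfl⟩
    exacts [⟨hx, hy⟩, ⟨hy, hx⟩]
  exact hBA (hN.2 B hB A hA a b (Subtype.coe_ne_coe.mpr hab) a.2 b.2 hsub.1 hsub.2 ha hb)

theorem IsGraphCover.exists_retraction_of_nerveIsTree (hG : IsGraphCover V E)
    (hN : NerveIsTree V E) (hA : A ∈ E) :
    ∃ r : X → X, (∀ x, r x ∈ A) ∧ (∀ x ∈ A, r x = x) ∧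
      ∀ B ∈ E, B ≠ A → ∀ x ∈ B, ∀ y ∈ B, r x = r y := by
  obtain ⟨a, b, hab, hVA⟩ := hG.2.2.2.2 A hA
  have ha : a ∈ V ∩ A := hVA ▸ Set.mem_insert a {b}
  have hb : b ∈ V ∩ A := hVA ▸ Set.mem_insert_of_mem a rfl
  set a' : V := ⟨a, ha.1⟩
  set b' : V := ⟨b, hb.1⟩
  have hab' : a' ≠ b' := fun h => hab (congrArg Subtype.val h)
  set N := (nerve V E).deleteEdges {s(a', b')}
  have hcut : ¬N.Reachable a' b' := isBridge_iff.mp <|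
    isAcyclic_iff_forall_adj_isBridge.mp hN.1.isAcyclic ⟨hab', A, hA, ha.2, hb.2⟩
  have hmem_V : ∀ ⦃B⦄, B ∈ E → B ≠ A → ∀ x ∈ A ∩ B, x ∈ V ∩ A := fun B hB hBA x hx =>
    ⟨(hG.2.2.2.1 A hA B hB hBA.symm).2 hx, hx.1⟩
  let onSideA (B : Set X) : Prop := ∃ v : V, (v : X) ∈ B ∧ N.Reachable a' v
  let r (x : X) : X := if x ∈ A then x else if ∃ B ∈ E, B ≠ A ∧ x ∈ B ∧ onSideA B then a else b
  have hr : ∀ B ∈ E, B ≠ A → ∀ x ∈ B, r x = if onSideA B then a else b := by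
    intro B hB hBA x hxB
    by_cases hxA : x ∈ A
    · have hx : x ∈ V ∩ A := hmem_V hB hBA x ⟨hxA, hxB⟩
      simp only [r, if_pos hxA]
      rw [hVA, Set.mem_insert_iff, Set.mem_singleton_iff] at hx
      rcases hx with rfl | rfl
      · rw [if_pos ⟨a', hxB, .rfl⟩]
      · rw [if_neg]
        rintro ⟨v, hvB, hv⟩
        exact hcut (hv.trans (hN.reachable_deleteEdges_of_mem hA hab' ha.2 hb.2 hB hBA hvB hxB))
    · simp only [r, if_neg hxA]
      by_cases hside : onSideA B
      · rw [if_pos hside, if_pos ⟨B, hB, hBA, hxB, hside⟩]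
      · rw [if_neg hside, if_neg]
        rintro ⟨B', hB', hB'A, hxB', v, hvB', hv⟩
        have hBB' : B ≠ B' := by
          rintro rfl
          exact hside ⟨v, hvB', hv⟩
        have hxV : x ∈ V := (hG.2.2.2.1 B hB B' hB' hBB').2 ⟨hxB, hxB'⟩
        exact hside ⟨⟨x, hxV⟩, hxB,
          hv.trans (hN.reachable_deleteEdges_of_mem hA hab' ha.2 hb.2 hB' hB'A hvB' hxB')⟩
  refine ⟨r, fun x => ?_, fun x hx => if_pos hx, fun B hB hBA x hx y hy => ?_⟩
  · unfold r
    split_ifs with hx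
    exacts [hx, ha.2, hb.2]
  · rw [hr B hB hBA x hx, hr B hB hBA y hy]

end Cover

end Skel

/-- For a tree-cover of a finite metric space and a minimum spanning tree `W`,
the restriction of `W` to each cover set is a tree. -/
theorem statement5 {X : Type*} [MetricSpace X] [Finite X]
    (Vc : Set X) (Ec : Set (Set X))
    (hcov : IsTreeCover (fun a b => dist a b) Vc Ec)
    (W : SimpleGraph X) (hW : IsMST (fun a b => dist a b) W) :
    ∀ A ∈ Ec, (W.induce A).IsTree := by
  obtain ⟨hG, hN, hsep⟩ := hcov
  have hW_local : ∀ u v, W.Adj u v → ∃ B ∈ Ec, u ∈ B ∧ v ∈ B := by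
    intro u v huv
    by_contra hnot
    obtain ⟨t, ht⟩ := hsep u v huv.ne hnot
    exact (hW.dist_le_max_of_adj huv t).not_gt ht
  intro A hA
  obtain ⟨r, hr_mem, hr_id, hr_const⟩ := hG.exists_retraction_of_nerveIsTree hN hA
  refine ⟨hW.1.connected.induce_of_retraction r hr_mem hr_id fun u v huv => ?_,
    hW.1.isAcyclic.induce A⟩
  obtain ⟨B, hB, hu, hv⟩ := hW_local u v huv
  by_cases hBA : B = A
  · subst hBA
    exact .inr (by rwa [hr_id u hu, hr_id v hv])
  · exact .inl (hr_const B hB hBA u hu v hv)
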